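/- There is an absolute constant C > 0 with the following property: for every permutation π and every real number c ≥ 1 such that ex(m,π) ≤ c·m for all positive integers m, we have limsup_{n→∞} S_n(π)^{1/n} ≤ C·c². -/

import Mathlib

/-! Klazar's argument. Merging the rows and columns of a matrix in consecutive pairs maps
`π`-avoiding matrices to `π`-avoiding matrices, and a matrix with image `B` is determined by its
`2 × 2` blocks at the ones of `B`; hence `T(2m) ≤ T(m) · 16 ^ ex(m, π)`, and iterating gives
`T(N) ≤ 2 · 256 ^ (t N)` when `ex(m, π) ≤ t m`. A `π`-avoiding permutation of length `n` is
recovered from its contraction into `t × t` blocks, a `π`-avoiding matrix of size `n / t + 1`,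
together with two numbers below `t` for each entry: the rank of its block column among the at
most `t` block columns met by its block row, and its offset inside its block column. So
`S_n(π) ≤ T(n / t + 1) · t ^ (2 n) ≤ 2 · 256 ^ t · (256 t²) ^ n`, and `t = ⌈c⌉ ≤ 2 c`. -/

open Filter

/-- A binary matrix `A` contains a binary matrix `P` (as a submatrix pattern):
there are strictly increasing choices of rows and columns such that `A` has a
one wherever `P` does. -/
def ContainsMat {k l m n : ℕ} (P : Fin k → Fin l → Bool) (A : Fin m → Fin n → Bool) : Prop :=
  ∃ (r : Fin k → Fin m) (c : Fin l → Fin n), StrictMono r ∧ StrictMono c ∧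
    ∀ i j, P i j = true → A (r i) (c j) = true

/-- The permutation matrix of a permutation of `{1,…,k}`. -/
def permMatrix {k : ℕ} (π : Equiv.Perm (Fin k)) : Fin k → Fin k → Bool :=
  fun i j => decide (π i = j)

/-- The mass of a binary matrix: the number of its one-entries. -/
def mass {m n : ℕ} (A : Fin m → Fin n → Bool) : ℕ :=
  (Finset.univ.filter fun p : Fin m × Fin n => A p.1 p.2 = true).card

/-- A binary matrix avoids a permutation if it avoids its permutation matrix. -/
def AvoidsPerm {k m n : ℕ} (A : Fin m → Fin n → Bool) (π : Equiv.Perm (Fin k)) : Prop :=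
  ¬ ContainsMat (permMatrix π) A

/-- `ex n π`: the maximum mass of an `n × n` binary matrix avoiding `π`. -/
noncomputable def exP {k : ℕ} (n : ℕ) (π : Equiv.Perm (Fin k)) : ℕ :=
  sSup {m | ∃ A : Fin n → Fin n → Bool, AvoidsPerm A π ∧ mass A = m}

/-- `ex n U` for a set `U` of permutations: the maximum mass of an `n × n`
binary matrix avoiding every permutation in `U`. -/
noncomputable def exU {k : ℕ} (n : ℕ) (U : Finset (Equiv.Perm (Fin k))) : ℕ :=
  sSup {m | ∃ A : Fin n → Fin n → Bool, (∀ π ∈ U, AvoidsPerm A π) ∧ mass A = m}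

/-- An `n`-permutation `σ` contains a `k`-permutation `π`. -/
def PermContains {n k : ℕ} (σ : Equiv.Perm (Fin n)) (π : Equiv.Perm (Fin k)) : Prop :=
  ∃ x : Fin k → Fin n, StrictMono x ∧ ∀ i j, σ (x i) < σ (x j) ↔ π i < π j

/-- `S n π`: the number of `n`-permutations avoiding `π`. -/
noncomputable def SP {k : ℕ} (n : ℕ) (π : Equiv.Perm (Fin k)) : ℕ :=
  Nat.card {σ : Equiv.Perm (Fin n) // ¬ PermContains σ π}

/-- `S n U`: the number of `n`-permutations avoiding every permutation in `U`. -/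
noncomputable def SU {k : ℕ} (n : ℕ) (U : Finset (Equiv.Perm (Fin k))) : ℕ :=
  Nat.card {σ : Equiv.Perm (Fin n) // ∀ π ∈ U, ¬ PermContains σ π}

/-- `T n π`: the number of `n × n` binary matrices avoiding `π`. -/
noncomputable def TP {k : ℕ} (n : ℕ) (π : Equiv.Perm (Fin k)) : ℕ :=
  Nat.card {A : Fin n → Fin n → Bool // AvoidsPerm A π}

/-- `P` is an interval minor of `A`: there are ordered disjoint row intervals
`[rlo a, rhi a]` and column intervals `[clo b, chi b]` such that wherever `P`
has a one, the corresponding block of `A` contains a one. -/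
def IntervalMinor {k l m n : ℕ} (P : Fin k → Fin l → Bool) (A : Fin m → Fin n → Bool) : Prop :=
  ∃ (rlo rhi : Fin k → Fin m) (clo chi : Fin l → Fin n),
    (∀ a, rlo a ≤ rhi a) ∧ (∀ a b, a < b → rhi a < rlo b) ∧
    (∀ a, clo a ≤ chi a) ∧ (∀ a b, a < b → chi a < clo b) ∧
    ∀ a b, P a b = true → ∃ i j, rlo a ≤ i ∧ i ≤ rhi a ∧ clo b ≤ j ∧ j ≤ chi b ∧ A i j = true

/-- The all-ones `k × l` binary matrix. -/
def J (k l : ℕ) : Fin k → Fin l → Bool := fun _ _ => true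

/-- `m n P`: the maximum mass of an `n × n` binary matrix avoiding `P` as an
interval minor. -/
noncomputable def mP {k l : ℕ} (n : ℕ) (P : Fin k → Fin l → Bool) : ℕ :=
  sSup {m | ∃ A : Fin n → Fin n → Bool, ¬ IntervalMinor P A ∧ mass A = m}

/-- `f_P(t,s)`: the supremum (in `ℕ∞`) of those `N` for which there is an
`N × t` binary matrix with at least `s` ones in each row avoiding `P` as an
interval minor. -/
noncomputable def fP {k l : ℕ} (P : Fin k → Fin l → Bool) (t s : ℕ) : ℕ∞ :=
  sSup {x : ℕ∞ | ∃ N : ℕ, x = (N : ℕ∞) ∧ ∃ A : Fin N → Fin t → Bool,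
    (∀ i, s ≤ (Finset.univ.filter fun j => A i j = true).card) ∧ ¬ IntervalMinor P A}

/-- `g_P(t,s)`: the supremum (in `ℕ∞`) of those `N` for which there is a
`t × N` binary matrix with at least `s` ones in each column avoiding `P` as an
interval minor. -/
noncomputable def gP {k l : ℕ} (P : Fin k → Fin l → Bool) (t s : ℕ) : ℕ∞ :=
  sSup {x : ℕ∞ | ∃ N : ℕ, x = (N : ℕ∞) ∧ ∃ A : Fin t → Fin N → Bool,
    (∀ j, s ≤ (Finset.univ.filter fun i => A i j = true).card) ∧ ¬ IntervalMinor P A}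

open Finset Topology

section Contraction

variable {k : ℕ} {π : Equiv.Perm (Fin k)}

def contract {m m' M M' : ℕ} (f : Fin m → Fin M) (g : Fin m' → Fin M')
    (A : Fin m → Fin m' → Bool) : Fin M → Fin M' → Bool :=
  fun i j => decide (∃ x y, f x = i ∧ g y = j ∧ A x y = true)

lemma contract_eq_true_iff {m m' M M' : ℕ} {f : Fin m → Fin M} {g : Fin m' → Fin M'}
    {A : Fin m → Fin m' → Bool} {i : Fin M} {j : Fin M'} :
    contract f g A i j = true ↔ ∃ x y, f x = i ∧ g y = j ∧ A x y = true :=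
  decide_eq_true_iff

lemma contract_apply_of_eq_true {m m' M M' : ℕ} {f : Fin m → Fin M} {g : Fin m' → Fin M'}
    {A : Fin m → Fin m' → Bool} {x : Fin m} {y : Fin m'} (h : A x y = true) :
    contract f g A (f x) (g y) = true :=
  contract_eq_true_iff.mpr ⟨x, y, rfl, rfl, h⟩

/-- A copy of `π` in the image lifts to a copy in `A`, since monotone maps reflect strict
inequalities. -/
lemma AvoidsPerm.contract {m m' M M' : ℕ} {f : Fin m → Fin M} {g : Fin m' → Fin M'}
    (hf : Monotone f) (hg : Monotone g) {A : Fin m → Fin m' → Bool}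
    (hA : AvoidsPerm A π) : AvoidsPerm (contract f g A) π := by
  rintro ⟨r, c, hr, hc, h⟩
  have lift : ∀ i, ∃ x y, f x = r i ∧ g y = c (π i) ∧ A x y = true := fun i =>
    contract_eq_true_iff.mp (h i (π i) (by simp [permMatrix]))
  choose x y hx hy hxy using lift
  refine hA ⟨x, fun j => y (π.symm j), fun i i' hii' => ?_, fun j j' hjj' => ?_, ?_⟩
  · exact hf.reflect_lt (by rw [hx, hx]; exact hr hii')
  · exact hg.reflect_lt (by simpa only [hy, Equiv.apply_symm_apply] using hc hjj')
  · intro i j hij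
    obtain rfl : π i = j := by simpa [permMatrix] using hij
    simpa using hxy i

end Contraction

lemma avoidsPerm_permMatrix {k n : ℕ} {π : Equiv.Perm (Fin k)} {σ : Equiv.Perm (Fin n)}
    (h : ¬ PermContains σ π) : AvoidsPerm (permMatrix σ) π := by
  rintro ⟨r, c, hr, hc, hmem⟩
  have hσr : ∀ i, σ (r i) = c (π i) := fun i => by
    simpa [permMatrix] using hmem i (π i) (by simp [permMatrix])
  exact h ⟨r, hr, fun i j => by rw [hσr, hσr, hc.lt_iff_lt]⟩

lemma mass_le_exP {k M : ℕ} {π : Equiv.Perm (Fin k)} {B : Fin M → Fin M → Bool}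
    (hB : AvoidsPerm B π) : mass B ≤ exP M π := by
  refine le_csSup ⟨M * M, ?_⟩ ⟨B, hB, rfl⟩
  rintro _ ⟨A, -, rfl⟩
  simpa [mass] using card_filter_le (univ : Finset (Fin M × Fin M)) _

section Blocks

variable {n m : ℕ}

def blockOf (t : ℕ) (h : n ≤ t * m) (x : Fin n) : Fin m :=
  ⟨x / t, Nat.div_lt_of_lt_mul (x.2.trans_le h)⟩

def blockOffset (t : ℕ) (h : n ≤ t * m) (x : Fin n) : Fin t :=
  ⟨x % t, Nat.mod_lt _ (Nat.pos_of_mul_pos_right (x.pos.trans_le h))⟩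

variable {t : ℕ} {h : n ≤ t * m}

lemma blockOf_monotone : Monotone (blockOf t h) :=
  fun _ _ hxy => Nat.div_le_div_right (c := t) hxy

lemma eq_of_blockOf_eq_of_blockOffset_eq {x y : Fin n} (hb : blockOf t h x = blockOf t h y)
    (ho : blockOffset t h x = blockOffset t h y) : x = y := by
  rw [Fin.ext_iff, ← Nat.div_add_mod x t, ← Nat.div_add_mod y t]
  rw [blockOf, blockOf, Fin.mk.injEq] at hb
  rw [blockOffset, blockOffset, Fin.mk.injEq] at ho
  rw [hb, ho]

lemma card_blockOf_eq_le (i : Fin m) : #{x | blockOf t h x = i} ≤ t := by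
  calc #{x | blockOf t h x = i} ≤ #(univ : Finset (Fin t)) :=
        card_le_card_of_injOn (blockOffset t h) (fun _ _ => mem_univ _) fun x hx y hy hxy =>
          eq_of_blockOf_eq_of_blockOffset_eq (by simp_all) hxy
    _ = t := by simp

end Blocks

section Merging

variable {n m t : ℕ} {h : n ≤ t * m}

lemma card_blockOf_preimage_le (B : Fin m → Fin m → Bool) :
    #{p : Fin n × Fin n | B (blockOf t h p.1) (blockOf t h p.2) = true} ≤ t * t * mass B := by
  classical
  calc #{p : Fin n × Fin n | B (blockOf t h p.1) (blockOf t h p.2) = true}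
      ≤ #((univ.filter fun q : Fin m × Fin m => B q.1 q.2 = true).biUnion fun q =>
          (univ.filter (blockOf t h · = q.1)) ×ˢ (univ.filter (blockOf t h · = q.2))) := by
        refine card_le_card fun p hp => ?_
        simp only [mem_filter, mem_univ, true_and] at hp
        simpa using hp
    _ ≤ mass B * (t * t) := card_biUnion_le_card_mul _ _ _ fun q _ => by
        rw [card_product]
        exact Nat.mul_le_mul (card_blockOf_eq_le _) (card_blockOf_eq_le _)
    _ = t * t * mass B := mul_comm _ _

/-- A matrix with contraction `B` vanishes outside the blocks of the ones of `B`, so it is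
determined by its entries in those blocks. -/
lemma card_contract_eq_le (B : Fin m → Fin m → Bool) :
    #{A : Fin n → Fin n → Bool | contract (blockOf t h) (blockOf t h) A = B}
      ≤ 2 ^ (t * t * mass B) := by
  classical
  set R : Finset (Fin n × Fin n) := {p | B (blockOf t h p.1) (blockOf t h p.2) = true}
  have hvanish : ∀ A, contract (blockOf t h) (blockOf t h) A = B → ∀ x y, (x, y) ∉ R →
      A x y = false := by
    rintro A rfl x y hxy
    by_contra hA
    exact hxy (by simpa [R] using contract_apply_of_eq_true (Bool.not_eq_false _ ▸ hA))
  calc #{A : Fin n → Fin n → Bool | contract (blockOf t h) (blockOf t h) A = B}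
      ≤ #(univ : Finset (R → Bool)) := by
        refine card_le_card_of_injOn (fun A r => A r.1.1 r.1.2) (fun _ _ => mem_univ _) ?_
        intro A hA A' hA' hAA'
        funext x y
        by_cases hxy : (x, y) ∈ R
        · exact congrFun hAA' ⟨(x, y), hxy⟩
        · rw [hvanish A (by simpa using hA) x y hxy, hvanish A' (by simpa using hA') x y hxy]
    _ = 2 ^ #R := by simp
    _ ≤ 2 ^ (t * t * mass B) := Nat.pow_le_pow_right two_pos (card_blockOf_preimage_le B)

end Merging

section Counting

variable {k : ℕ} (π : Equiv.Perm (Fin k))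

open Classical in
lemma TP_eq_card (N : ℕ) : TP N π = #{A : Fin N → Fin N → Bool | AvoidsPerm A π} := by
  rw [TP, Nat.card_eq_fintype_card, Fintype.card_subtype]

lemma TP_le_TP_mul_two_pow {n m t : ℕ} (h : n ≤ t * m) :
    TP n π ≤ TP m π * 2 ^ (t * t * exP m π) := by
  classical
  set Φ : (Fin n → Fin n → Bool) → Fin m → Fin m → Bool := contract (blockOf t h) (blockOf t h)
  have himage : image Φ {A | AvoidsPerm A π} ⊆ univ.filter (AvoidsPerm · π) := by
    simp only [subset_iff, mem_image, mem_filter, mem_univ, true_and]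
    rintro _ ⟨A, hA, rfl⟩
    exact hA.contract blockOf_monotone blockOf_monotone
  have hfiber : ∀ B ∈ image Φ {A | AvoidsPerm A π},
      #{A ∈ {A | AvoidsPerm A π} | Φ A = B} ≤ 2 ^ (t * t * exP m π) := fun B hB =>
    calc #{A ∈ {A | AvoidsPerm A π} | Φ A = B} ≤ #{A | Φ A = B} :=
          card_le_card (filter_subset_filter _ (subset_univ _))
      _ ≤ 2 ^ (t * t * mass B) := card_contract_eq_le B
      _ ≤ 2 ^ (t * t * exP m π) := Nat.pow_le_pow_right two_pos
          (Nat.mul_le_mul_left _ (mass_le_exP (by simpa using himage hB)))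
  rw [TP_eq_card, TP_eq_card, mul_comm]
  exact (card_le_mul_card_image _ _ hfiber).trans (Nat.mul_le_mul_left _ (card_le_card himage))

lemma TP_le_two_pow (N : ℕ) : TP N π ≤ 2 ^ (N * N) := by
  classical
  rw [TP_eq_card]
  refine (card_filter_le _ _).trans ?_
  simp [pow_mul]

lemma TP_le_of_exP_le {t : ℕ} (hex : ∀ m, 0 < m → exP m π ≤ t * m) (N : ℕ) :
    TP N π ≤ 2 * 256 ^ (t * N) := by
  induction N using Nat.strong_induction_on with
  | _ N ih =>
    rcases Nat.lt_or_ge N 2 with hN | hN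
    · calc TP N π ≤ 2 ^ (N * N) := TP_le_two_pow π N
        _ ≤ 2 := by interval_cases N <;> simp
        _ ≤ 2 * 256 ^ (t * N) := Nat.le_mul_of_pos_right _ (by positivity)
    set M := (N + 1) / 2
    calc TP N π ≤ TP M π * 2 ^ (2 * 2 * exP M π) := TP_le_TP_mul_two_pow π (by omega)
      _ ≤ 2 * 256 ^ (t * M) * 2 ^ (2 * 2 * (t * M)) :=
          Nat.mul_le_mul (ih M (by omega))
            (Nat.pow_le_pow_right two_pos (Nat.mul_le_mul_left _ (hex M (by omega))))
      _ = 2 * 16 ^ (3 * (t * M)) := by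
          rw [show (256 : ℕ) = 16 ^ 2 by norm_num, pow_mul 2 (2 * 2), ← pow_mul]
          norm_num
          ring
      _ ≤ 2 * 16 ^ (2 * (t * N)) :=
          Nat.mul_le_mul_left _ (Nat.pow_le_pow_right (by norm_num) (by
            have : 3 * M ≤ 2 * N := by omega
            nlinarith))
      _ = 2 * 256 ^ (t * N) := by rw [pow_mul]; norm_num

end Counting

lemma strictMonoOn_card_filter_lt {α : Type*} [LinearOrder α] (S : Finset α) :
    StrictMonoOn (fun a => #{b ∈ S | b < a}) S := by
  intro a ha b _ hab
  refine card_lt_card ((ssubset_iff_of_subset fun c hc => ?_).mpr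
    ⟨a, mem_filter.mpr ⟨ha, hab⟩, by simp⟩)
  rw [mem_filter] at hc ⊢
  exact ⟨hc.1, hc.2.trans hab⟩

lemma card_filter_lt_lt_card {α : Type*} [LinearOrder α] {S : Finset α} {a : α} (ha : a ∈ S) :
    #{b ∈ S | b < a} < #S :=
  card_lt_card ((ssubset_iff_of_subset (filter_subset _ _)).mpr ⟨a, ha, by simp⟩)

section Encoding

variable {n m t : ℕ} {h : n ≤ t * m}

lemma card_contract_permMatrix_row_le (σ : Equiv.Perm (Fin n)) (i : Fin m) :
    #{j | contract (blockOf t h) (blockOf t h) (permMatrix σ) i j = true} ≤ t := by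
  calc #{j | contract (blockOf t h) (blockOf t h) (permMatrix σ) i j = true}
      ≤ #(image (blockOf t h ∘ σ) {x | blockOf t h x = i}) := by
        refine card_le_card fun j hj => ?_
        obtain ⟨x, y, rfl, rfl, hxy⟩ := contract_eq_true_iff.mp (mem_filter.mp hj).2
        obtain rfl : σ x = y := by simpa [permMatrix] using hxy
        exact mem_image.mpr ⟨x, by simp, rfl⟩
    _ ≤ t := card_image_le.trans (card_blockOf_eq_le i)

lemma blockOf_apply_mem_row (σ : Equiv.Perm (Fin n)) (x : Fin n) :
    blockOf t h (σ x) ∈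
      ({j | contract (blockOf t h) (blockOf t h) (permMatrix σ) (blockOf t h x) j = true} :
        Finset (Fin m)) :=
  mem_filter.mpr ⟨mem_univ _, contract_apply_of_eq_true (by simp [permMatrix])⟩

variable (t h) in
def blockRank (σ : Equiv.Perm (Fin n)) (x : Fin n) : Fin t :=
  ⟨#{j ∈ {j | contract (blockOf t h) (blockOf t h) (permMatrix σ) (blockOf t h x) j = true} |
      j < blockOf t h (σ x)},
    (card_filter_lt_lt_card (blockOf_apply_mem_row σ x)).trans_le
      (card_contract_permMatrix_row_le σ _)⟩

lemma eq_of_contract_eq_of_blockRank_eq {σ τ : Equiv.Perm (Fin n)}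
    (hB : contract (blockOf t h) (blockOf t h) (permMatrix σ) =
      contract (blockOf t h) (blockOf t h) (permMatrix τ))
    (hrank : blockRank t h σ = blockRank t h τ)
    (hoffset : ∀ x, blockOffset t h (σ x) = blockOffset t h (τ x)) : σ = τ := by
  ext x : 1
  refine eq_of_blockOf_eq_of_blockOffset_eq ?_ (hoffset x)
  have hτ := blockOf_apply_mem_row (h := h) τ x
  rw [← hB] at hτ
  refine strictMonoOn_card_filter_lt _ |>.injOn (blockOf_apply_mem_row σ x) hτ ?_
  have := congrArg Fin.val (congrFun hrank x)
  simp only [blockRank, hB] at this ⊢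
  exact this

variable {k : ℕ} (π : Equiv.Perm (Fin k))

lemma SP_le_TP_mul_pow (h : n ≤ t * m) : SP n π ≤ TP m π * (t * t) ^ n := by
  let code : {σ : Equiv.Perm (Fin n) // ¬ PermContains σ π} →
      {B : Fin m → Fin m → Bool // AvoidsPerm B π} × (Fin n → Fin t × Fin t) := fun σ =>
    (⟨contract (blockOf t h) (blockOf t h) (permMatrix σ.1),
        (avoidsPerm_permMatrix σ.2).contract blockOf_monotone blockOf_monotone⟩,
      fun x => (blockRank t h σ x, blockOffset t h (σ.1 x)))
  have hcode : Function.Injective code := by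
    rintro ⟨σ, hσ⟩ ⟨τ, hτ⟩ hστ
    obtain ⟨hB, hdata⟩ := Prod.mk.inj hστ
    exact Subtype.ext <| eq_of_contract_eq_of_blockRank_eq (congrArg Subtype.val hB)
      (funext fun x => congrArg Prod.fst (congrFun hdata x))
      fun x => congrArg Prod.snd (congrFun hdata x)
  calc SP n π ≤ Nat.card (_ × (Fin n → Fin t × Fin t)) := Nat.card_le_card_of_injective _ hcode
    _ = TP m π * (t * t) ^ n := by simp [Nat.card_prod, TP]

end Encoding

lemma SP_le_of_exP_le {k : ℕ} (π : Equiv.Perm (Fin k)) {t : ℕ} (ht : 0 < t)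
    (hex : ∀ m, 0 < m → exP m π ≤ t * m) (n : ℕ) :
    SP n π ≤ 2 * 256 ^ t * (256 * t ^ 2) ^ n := by
  have hn : n ≤ t * (n / t + 1) := by nlinarith [Nat.lt_div_mul_add (a := n) ht]
  have htn : t * (n / t + 1) ≤ n + t := by nlinarith [Nat.div_mul_le_self n t]
  calc SP n π ≤ TP (n / t + 1) π * (t * t) ^ n := SP_le_TP_mul_pow π hn
    _ ≤ 2 * 256 ^ (n + t) * (t * t) ^ n := by
        gcongr
        exact (TP_le_of_exP_le π hex _).trans (by gcongr; norm_num)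
    _ = 2 * 256 ^ t * (256 * t ^ 2) ^ n := by ring

lemma limsup_rpow_one_div_le {f : ℕ → ℝ} {A D : ℝ} (hf : ∀ n, 0 ≤ f n) (hA : 0 < A)
    (hD : 0 ≤ D) (hfAD : ∀ n, f n ≤ A * D ^ n) :
    limsup (fun n : ℕ => f n ^ ((1 : ℝ) / n)) atTop ≤ D := by
  have hle : ∀ᶠ n : ℕ in atTop, f n ^ ((1 : ℝ) / n) ≤ A ^ ((1 : ℝ) / n) * D := by
    filter_upwards [eventually_ne_atTop 0] with n hn
    calc f n ^ ((1 : ℝ) / n) ≤ (A * D ^ n) ^ ((1 : ℝ) / n) :=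
          Real.rpow_le_rpow (hf n) (hfAD n) (by positivity)
      _ = A ^ ((1 : ℝ) / n) * D := by
          rw [Real.mul_rpow hA.le (by positivity), one_div, Real.pow_rpow_inv_natCast hD hn]
  have hlim : Tendsto (fun n : ℕ => A ^ ((1 : ℝ) / n) * D) atTop (𝓝 D) := by
    have h0 := (Real.continuousAt_const_rpow hA.ne').tendsto.comp
      tendsto_one_div_atTop_nhds_zero_nat
    simpa [Function.comp_def] using h0.mul_const D
  calc limsup (fun n : ℕ => f n ^ ((1 : ℝ) / n)) atTop
      ≤ limsup (fun n : ℕ => A ^ ((1 : ℝ) / n) * D) atTop :=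
        limsup_le_limsup hle (isCoboundedUnder_le_of_le atTop fun n => Real.rpow_nonneg (hf n) _)
          hlim.isBoundedUnder_le
    _ = D := hlim.limsup_eq

/-- There is an absolute constant `C > 0` with the following
property: for every permutation `π` and every real `c ≥ 1` such that
`ex(m,π) ≤ c·m` for all positive integers `m`, we have
`limsup_{n→∞} S_n(π)^{1/n} ≤ C·c²`. -/
theorem stmt14 :
    ∃ C : ℝ, 0 < C ∧ ∀ (k : ℕ) (π : Equiv.Perm (Fin k)) (c : ℝ), 1 ≤ c →
      (∀ m : ℕ, 0 < m → (exP m π : ℝ) ≤ c * (m : ℝ)) →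
      limsup (fun n : ℕ => (SP n π : ℝ) ^ ((1 : ℝ) / (n : ℝ))) atTop ≤ C * c ^ 2 := by
  refine ⟨1024, by norm_num, fun k π c hc hex => ?_⟩
  set t := ⌈c⌉₊
  have ht : 0 < t := Nat.ceil_pos.mpr (by linarith)
  have hct : c ≤ t := Nat.le_ceil c
  have htc : (t : ℝ) ≤ 2 * c := by linarith [Nat.ceil_lt_add_one (zero_le_one.trans hc)]
  have hext : ∀ m, 0 < m → exP m π ≤ t * m := fun m hm => by
    have : (exP m π : ℝ) ≤ t * m := (hex m hm).trans (by gcongr)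
    exact_mod_cast this
  calc limsup (fun n : ℕ => (SP n π : ℝ) ^ ((1 : ℝ) / (n : ℝ))) atTop ≤ 256 * (t : ℝ) ^ 2 :=
        limsup_rpow_one_div_le (fun n => Nat.cast_nonneg _) (A := 2 * 256 ^ t) (by positivity)
          (by positivity) fun n => by exact_mod_cast SP_le_of_exP_le π ht hext n
    _ ≤ 1024 * c ^ 2 := by nlinarith
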